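/- Let a, d be positive integers. Then the set { u/(a·v) : u, v ∈ ℤ_{>0}, gcd(u,v) = 1, u ≤ a·(d+1), v ≤ a·(d+1)! } is finite, and consequently any collection of rays R_j in ℝⁿ whose normalized intersection points with a fixed affine hyperplane lie in the lattice (1/(a·(d+1)!))·ℤⁿ is discrete. -/
import Mathlib


/-- Denominator bound from the Rationality Theorem: the set of rationals `u/(a*v)` with
`u, v` coprime positive integers, `u ≤ a*(d+1)` and `v ≤ a*(d+1)!` is finite; consequently
any collection of points of `ℝⁿ` (normalized intersections of rays with a fixed affine
hyperplane) lying in the lattice `(1/(a*(d+1)!)) • ℤⁿ` is discrete. -/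
theorem rationality_denominator_bound_discrete (a d : ℕ) (ha : 0 < a) (hd : 0 < d) :
    {q : ℚ | ∃ u v : ℕ, 0 < u ∧ 0 < v ∧ Nat.Coprime u v ∧
        u ≤ a * (d + 1) ∧ v ≤ a * Nat.factorial (d + 1) ∧
        q = (u : ℚ) / ((a : ℚ) * v)}.Finite ∧
      ∀ (n : ℕ) (ι : Type) (φ : (Fin n → ℝ) →ₗ[ℝ] ℝ) (c : ℝ) (z : ι → Fin n → ℝ),
        (∀ i, φ (z i) = c) →
        (∀ i k, ∃ m : ℤ, z i k = (m : ℝ) / ((a : ℝ) * Nat.factorial (d + 1))) →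
        ∀ x ∈ Set.range z, ∃ ε : ℝ, 0 < ε ∧
          ∀ y ∈ Set.range z, y ≠ x → ε ≤ dist x y := by
  constructor
  · have hsub : {q : ℚ | ∃ u v : ℕ, 0 < u ∧ 0 < v ∧ Nat.Coprime u v ∧
        u ≤ a * (d + 1) ∧ v ≤ a * Nat.factorial (d + 1) ∧
        q = (u : ℚ) / ((a : ℚ) * v)} ⊆
        (fun p : ℕ × ℕ => (p.1 : ℚ) / ((a : ℚ) * p.2)) ''
          (Set.Iic (a * (d + 1)) ×ˢ Set.Iic (a * Nat.factorial (d + 1))) := by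
      rintro q ⟨u, v, _, _, _, hu, hv, rfl⟩
      exact ⟨(u, v), ⟨hu, hv⟩, rfl⟩
    exact (((Set.finite_Iic _).prod (Set.finite_Iic _)).image _).subset hsub
  · intro n ι φ c z hφ hlat x hx
    set M : ℝ := (a : ℝ) * Nat.factorial (d + 1) with hM
    have hMpos : 0 < M := by
      apply mul_pos
      · exact_mod_cast ha
      · exact_mod_cast Nat.factorial_pos _
    refine ⟨1 / M, by positivity, ?_⟩
    rintro y ⟨j, rfl⟩ hne
    obtain ⟨i, rfl⟩ := hx
    have : ∃ k, z j k ≠ z i k := by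
      by_contra h
      push_neg at h
      exact hne (funext h)
    obtain ⟨k, hk⟩ := this
    obtain ⟨m₁, hm₁⟩ := hlat j k
    obtain ⟨m₂, hm₂⟩ := hlat i k
    have hle : 1 / M ≤ dist (z j k) (z i k) := by
      rw [Real.dist_eq, hm₁, hm₂, div_sub_div_same, abs_div, abs_of_pos hMpos]
      have hmne : m₁ ≠ m₂ := by
        intro h; rw [h] at hm₁; exact hk (hm₁.trans hm₂.symm)
      have h1 : (1 : ℤ) ≤ |m₁ - m₂| := Int.one_le_abs (sub_ne_zero.mpr hmne)
      have h2 : (1 : ℝ) ≤ |(m₁ : ℝ) - m₂| := by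
        calc (1 : ℝ) ≤ |(m₁ - m₂ : ℤ)| := by exact_mod_cast h1
          _ = |(m₁ : ℝ) - m₂| := by push_cast; rfl
      gcongr
    calc 1 / M ≤ dist (z j k) (z i k) := hle
      _ ≤ dist (z j) (z i) := dist_le_pi_dist _ _ k
      _ = dist (z i) (z j) := dist_comm _ _
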